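/- arXiv:2306.00896 — 6 statements merged into one kernel-verified Lean document; each statement's English description precedes it below -/
import Mathlib

section
/- For every real n > 0, the universal profile f_n is strictly decreasing on ℝ: for all real s₁ < s₂ one has f_n(s₂) < f_n(s₁). -/
/-
Write `w_s(x) = x^{n-1} e^{-x⁴/4 - s x²/2}`, so that `f_n(s) = ∫ x² w_s / (n ∫ w_s)` is the mean of
`x²` under the probability density proportional to `w_s` on `(0, ∞)`. For `s₁ < s₂` the ratio
`w_{s₁}/w_{s₂} = e^{(s₂-s₁)x²/2}` is strictly increasing in `x²`, so the kernel
`(x² - y²)(w_{s₁}(x) w_{s₂}(y) - w_{s₁}(y) w_{s₂}(x))` is positive off the diagonal. Its integral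
over `(0,∞)²` is `2 (∫ x² w_{s₁} ∫ w_{s₂} - ∫ x² w_{s₂} ∫ w_{s₁})` (Chebyshev's symmetrization
trick), which gives the strict cross inequality `f_n(s₂) < f_n(s₁)`.
-/

open MeasureTheory

/-- `I k s = ∫₀^∞ x^k e^{-x⁴/4 - s x²/2} dx`. -/
noncomputable def I (k s : ℝ) : ℝ :=
  ∫ x in Set.Ioi (0 : ℝ), x ^ k * Real.exp (-x ^ 4 / 4 - s * x ^ 2 / 2)

/-- The universal profile `f n s = I (n+1) s / (n · I (n-1) s)`. -/
noncomputable def f (n s : ℝ) : ℝ := I (n + 1) s / (n * I (n - 1) s)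

open Real Set

section Chebyshev

variable {α : Type*}

def chebyshevKernel (φ p q : α → ℝ) (z : α × α) : ℝ :=
  (φ z.1 - φ z.2) * (p z.1 * q z.2 - p z.2 * q z.1)

theorem chebyshevKernel_eq (φ p q : α → ℝ) :
    chebyshevKernel φ p q = fun z => φ z.1 * p z.1 * q z.2 - φ z.1 * q z.1 * p z.2
      - p z.1 * (φ z.2 * q z.2) + q z.1 * (φ z.2 * p z.2) := by
  funext z
  rw [chebyshevKernel]
  ring

variable [MeasurableSpace α] {μ : Measure α} [SFinite μ] {φ p q : α → ℝ}

omit [SFinite μ] in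
theorem integrable_chebyshevKernel (hp : Integrable p μ) (hq : Integrable q μ)
    (hφp : Integrable (fun x => φ x * p x) μ) (hφq : Integrable (fun x => φ x * q x) μ) :
    Integrable (chebyshevKernel φ p q) (μ.prod μ) := by
  rw [chebyshevKernel_eq]
  exact (((hφp.mul_prod hq).sub (hφq.mul_prod hp)).sub (hp.mul_prod hφq)).add (hq.mul_prod hφp)

theorem integral_chebyshevKernel (hp : Integrable p μ) (hq : Integrable q μ)
    (hφp : Integrable (fun x => φ x * p x) μ) (hφq : Integrable (fun x => φ x * q x) μ) :
    ∫ z, chebyshevKernel φ p q z ∂μ.prod μ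
      = 2 * ((∫ x, φ x * p x ∂μ) * (∫ x, q x ∂μ) - (∫ x, φ x * q x ∂μ) * ∫ x, p x ∂μ) := by
  have h₁ := hφp.mul_prod hq
  have h₂ := hφq.mul_prod hp
  have h₁₂ : Integrable (fun z => φ z.1 * p z.1 * q z.2 - φ z.1 * q z.1 * p z.2) (μ.prod μ) :=
    h₁.sub h₂
  have h₁₂₃ : Integrable (fun z => φ z.1 * p z.1 * q z.2 - φ z.1 * q z.1 * p z.2
      - p z.1 * (φ z.2 * q z.2)) (μ.prod μ) := h₁₂.sub (hp.mul_prod hφq)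
  rw [chebyshevKernel_eq, integral_add h₁₂₃ (hq.mul_prod hφp),
    integral_sub h₁₂ (hp.mul_prod hφq), integral_sub h₁ h₂,
    integral_prod_mul (fun x => φ x * p x) q, integral_prod_mul (fun x => φ x * q x) p,
    integral_prod_mul p (fun x => φ x * q x), integral_prod_mul q (fun x => φ x * p x)]
  ring

theorem mul_integral_lt_of_chebyshevKernel_pos (hp : Integrable p μ) (hq : Integrable q μ)
    (hφp : Integrable (fun x => φ x * p x) μ) (hφq : Integrable (fun x => φ x * q x) μ)
    (hK : 0 ≤ᵐ[μ.prod μ] chebyshevKernel φ p q)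
    (hK_supp : 0 < μ.prod μ (Function.support (chebyshevKernel φ p q))) :
    (∫ x, φ x * q x ∂μ) * (∫ x, p x ∂μ) < (∫ x, φ x * p x ∂μ) * ∫ x, q x ∂μ := by
  have hpos : 0 < ∫ z, chebyshevKernel φ p q z ∂μ.prod μ :=
    (integral_pos_iff_support_of_nonneg_ae hK (integrable_chebyshevKernel hp hq hφp hφq)).2 hK_supp
  linarith [integral_chebyshevKernel hp hq hφp hφq]

end Chebyshev

noncomputable def integrand (k s x : ℝ) : ℝ := x ^ k * exp (-x ^ 4 / 4 - s * x ^ 2 / 2)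

section Integrand

variable {k s s₁ s₂ x y : ℝ}

theorem I_eq_integral_integrand (k s : ℝ) : I k s = ∫ x in Ioi 0, integrand k s x := rfl

theorem integrand_pos (hx : 0 < x) : 0 < integrand k s x :=
  mul_pos (rpow_pos_of_pos hx k) (exp_pos _)

theorem integrand_add_two (hx : 0 < x) : integrand (k + 2) s x = x ^ 2 * integrand k s x := by
  rw [integrand, integrand, rpow_add hx, rpow_two]
  ring

theorem integrand_mul_integrand (k s₁ s₂ x y : ℝ) :
    integrand k s₁ x * integrand k s₂ y
      = exp ((s₂ - s₁) * (x ^ 2 - y ^ 2) / 2) * (integrand k s₁ y * integrand k s₂ x) := by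
  simp only [integrand]
  have hexp : exp (-x ^ 4 / 4 - s₁ * x ^ 2 / 2) * exp (-y ^ 4 / 4 - s₂ * y ^ 2 / 2)
      = exp ((s₂ - s₁) * (x ^ 2 - y ^ 2) / 2)
        * (exp (-y ^ 4 / 4 - s₁ * y ^ 2 / 2) * exp (-x ^ 4 / 4 - s₂ * x ^ 2 / 2)) := by
    simp only [← exp_add]
    ring_nf
  linear_combination x ^ k * y ^ k * hexp

theorem integrableOn_integrand (hk : -1 < k) (s : ℝ) : IntegrableOn (integrand k s) (Ioi 0) := by
  have hdom : IntegrableOn (fun x : ℝ => exp (s ^ 2 / 2) * (x ^ k * exp (-(1 / 8) * x ^ (4 : ℝ))))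
      (Ioi 0) :=
    (integrableOn_rpow_mul_exp_neg_mul_rpow hk (by norm_num) (by norm_num)).const_mul _
  refine hdom.mono' (by unfold integrand; fun_prop) ?_
  filter_upwards [ae_restrict_mem measurableSet_Ioi] with x (hx : 0 < x)
  rw [norm_of_nonneg (integrand_pos hx).le, integrand, rpow_ofNat, mul_left_comm, ← exp_add]
  gcongr
  nlinarith [sq_nonneg (x ^ 2 + 2 * s)]

theorem I_pos (hk : -1 < k) : 0 < I k s := by
  rw [I_eq_integral_integrand, setIntegral_pos_iff_support_of_nonneg_ae
    (ae_restrict_of_forall_mem measurableSet_Ioi fun x hx => (integrand_pos hx).le)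
    (integrableOn_integrand hk s)]
  have hsupp : Ioi (0 : ℝ) ⊆ Function.support (integrand k s) ∩ Ioi 0 :=
    subset_inter (fun x hx => (integrand_pos hx).ne') subset_rfl
  exact (measure_mono hsupp).trans_lt' (by simp)

theorem chebyshevKernel_integrand_pos (hs : s₁ < s₂) (hx : 0 < x) (hy : 0 < y) (hxy : x ≠ y) :
    0 < chebyshevKernel (· ^ 2) (integrand k s₁) (integrand k s₂) (x, y) := by
  have hP : 0 < integrand k s₁ y * integrand k s₂ x := mul_pos (integrand_pos hy) (integrand_pos hx)
  have ht : x ^ 2 - y ^ 2 ≠ 0 := by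
    rw [sub_ne_zero]
    exact fun h => hxy ((sq_eq_sq₀ hx.le hy.le).1 h)
  have hsign : 0 < (x ^ 2 - y ^ 2) * (exp ((s₂ - s₁) * (x ^ 2 - y ^ 2) / 2) - 1) := by
    rcases ht.lt_or_gt with ht | ht
    · exact mul_pos_of_neg_of_neg ht
        (sub_neg.2 (exp_lt_one_iff.2 (by nlinarith)))
    · exact mul_pos ht (sub_pos.2 (one_lt_exp_iff.2 (by nlinarith)))
  have hK : chebyshevKernel (· ^ 2) (integrand k s₁) (integrand k s₂) (x, y)
      = integrand k s₁ y * integrand k s₂ x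
        * ((x ^ 2 - y ^ 2) * (exp ((s₂ - s₁) * (x ^ 2 - y ^ 2) / 2) - 1)) := by
    simp only [chebyshevKernel]
    rw [integrand_mul_integrand k s₁ s₂ x y]
    ring
  rw [hK]
  exact mul_pos hP hsign

theorem chebyshevKernel_integrand_nonneg (hs : s₁ < s₂) (hx : 0 < x) (hy : 0 < y) :
    0 ≤ chebyshevKernel (· ^ 2) (integrand k s₁) (integrand k s₂) (x, y) := by
  rcases eq_or_ne x y with rfl | hxy
  · simp [chebyshevKernel]
  · exact (chebyshevKernel_integrand_pos hs hx hy hxy).le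

theorem I_add_two_mul_I_lt (hk : -1 < k) (hs : s₁ < s₂) :
    I (k + 2) s₂ * I k s₁ < I (k + 2) s₁ * I k s₂ := by
  set μ := volume.restrict (Ioi (0 : ℝ))
  have hI_add_two : ∀ s, I (k + 2) s = ∫ x, x ^ 2 * integrand k s x ∂μ := fun s =>
    setIntegral_congr_fun measurableSet_Ioi fun x hx => integrand_add_two hx
  have hint_add_two : ∀ s, Integrable (fun x => x ^ 2 * integrand k s x) μ := fun s =>
    (integrableOn_integrand (by linarith) s).congr_fun
      (fun x hx => integrand_add_two hx) measurableSet_Ioi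
  rw [hI_add_two, hI_add_two]
  refine mul_integral_lt_of_chebyshevKernel_pos (integrableOn_integrand hk s₁)
    (integrableOn_integrand hk s₂) (hint_add_two s₁) (hint_add_two s₂) ?_ ?_
  · rw [Measure.prod_restrict]
    filter_upwards [ae_restrict_mem (measurableSet_Ioi.prod measurableSet_Ioi)]
      with ⟨x, y⟩ ⟨hx, hy⟩
    exact chebyshevKernel_integrand_nonneg hs hx hy
  · have hbox : Ioo (0 : ℝ) 1 ×ˢ Ioo 1 2 ⊆ Function.support
        (chebyshevKernel (· ^ 2) (integrand k s₁) (integrand k s₂)) := by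
      rintro ⟨x, y⟩ ⟨hx, hy⟩
      exact (chebyshevKernel_integrand_pos hs hx.1 (by linarith [hy.1])
        (by linarith [hx.2, hy.1])).ne'
    refine (measure_mono hbox).trans_lt' ?_
    rw [Measure.prod_prod, Measure.restrict_apply measurableSet_Ioo,
      Measure.restrict_apply measurableSet_Ioo]
    norm_num [Ioo_inter_Ioi]

end Integrand

/-- For every real `n > 0`, the universal profile `f n` is strictly decreasing on `ℝ`. -/
theorem universal_profile_strict_anti_in_s (n : ℝ) (hn : 0 < n) :
    ∀ s₁ s₂ : ℝ, s₁ < s₂ → f n s₂ < f n s₁ := by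
  intro s₁ s₂ hs
  have hk : -1 < n - 1 := by linarith
  have hcross := I_add_two_mul_I_lt hk hs
  rw [show n - 1 + 2 = n + 1 by ring] at hcross
  rw [f, f, div_lt_div_iff₀ (mul_pos hn (I_pos hk)) (mul_pos hn (I_pos hk))]
  linarith [mul_lt_mul_of_pos_left hcross hn]
end

section
/- For every real n > 0 and every s ∈ ℝ, the integration-by-parts identity n · I_{n−1}(s) = I_{n+3}(s) + s · I_{n+1}(s) holds. -/
/-!
The derivative of `x ↦ xⁿ e^{-x⁴/4 - s x²/2}` is `(n xⁿ⁻¹ - xⁿ⁺³ - s xⁿ⁺¹) e^{-x⁴/4 - s x²/2}`.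
This function vanishes at `0` because `n > 0`, and both it and its derivative are integrable
on `(0, ∞)`, so it also vanishes at `∞` and the integral of the derivative is `0`.
-/

open MeasureTheory

open Real Set Filter

theorem integral_Ioi_eq_zero_of_hasDerivAt_of_integrableOn {E : Type*} [NormedAddCommGroup E]
    [NormedSpace ℝ E] [CompleteSpace E] {f f' : ℝ → E} {a : ℝ}
    (hcont : ContinuousWithinAt f (Ici a) a) (ha : f a = 0)
    (hderiv : ∀ x ∈ Ioi a, HasDerivAt f (f' x) x)
    (f'int : IntegrableOn f' (Ioi a)) (fint : IntegrableOn f (Ioi a)) :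
    ∫ x in Ioi a, f' x = 0 := by
  rw [integral_Ioi_of_hasDerivAt_of_tendsto hcont hderiv f'int
    (tendsto_zero_of_hasDerivAt_of_integrableOn_Ioi hderiv f'int fint), ha, sub_zero]

noncomputable def quarticWeight (s x : ℝ) : ℝ :=
  exp (-x ^ 4 / 4 - s * x ^ 2 / 2)

theorem quarticWeight_pos (s x : ℝ) : 0 < quarticWeight s x :=
  exp_pos _

theorem continuous_quarticWeight (s : ℝ) : Continuous (quarticWeight s) := by
  unfold quarticWeight
  fun_prop

theorem hasDerivAt_quarticWeight (s x : ℝ) :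
    HasDerivAt (quarticWeight s) (-(x ^ 3 + s * x) * quarticWeight s x) x := by
  have hexponent : HasDerivAt (fun y : ℝ => -y ^ 4 / 4 - s * y ^ 2 / 2) (-(x ^ 3 + s * x)) x := by
    refine (((hasDerivAt_pow 4 x).neg.div_const 4).sub
      (((hasDerivAt_pow 2 x).const_mul s).div_const 2)).congr_deriv ?_
    push_cast
    ring
  exact hexponent.exp.congr_deriv (mul_comm _ _)

-- `-x⁴/4 - s x²/2 = s²/2 - x⁴/8 - (x²/2 + s)²/2`
theorem quarticWeight_le (s x : ℝ) :
    quarticWeight s x ≤ exp (s ^ 2 / 2) * exp (-(1 / 8) * x ^ 4) := by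
  rw [quarticWeight, ← exp_add]
  exact exp_le_exp.2 (by nlinarith [sq_nonneg (x ^ 2 / 2 + s)])

theorem integrableOn_rpow_mul_quarticWeight {k : ℝ} (hk : -1 < k) (s : ℝ) :
    IntegrableOn (fun x => x ^ k * quarticWeight s x) (Ioi 0) := by
  have hdom : IntegrableOn (fun x : ℝ => exp (s ^ 2 / 2) * (x ^ k * exp (-(1 / 8) * x ^ (4 : ℝ))))
      (Ioi 0) :=
    (integrableOn_rpow_mul_exp_neg_mul_rpow hk (by norm_num) (by norm_num)).const_mul _
  refine hdom.mono' ?_ ?_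
  · refine ContinuousOn.aestronglyMeasurable ?_ measurableSet_Ioi
    exact (continuousOn_id.rpow_const fun x hx => Or.inl (ne_of_gt hx)).mul
      (continuous_quarticWeight s).continuousOn
  · filter_upwards [ae_restrict_mem measurableSet_Ioi] with x (hx : 0 < x)
    have hxk : 0 ≤ x ^ k := rpow_nonneg hx.le k
    rw [norm_mul, Real.norm_of_nonneg hxk, Real.norm_of_nonneg (quarticWeight_pos s x).le,
      rpow_ofNat, mul_left_comm]
    exact mul_le_mul_of_nonneg_left (quarticWeight_le s x) hxk

theorem hasDerivAt_rpow_mul_quarticWeight (n s : ℝ) {x : ℝ} (hx : 0 < x) :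
    HasDerivAt (fun y => y ^ n * quarticWeight s y)
      (n * (x ^ (n - 1) * quarticWeight s x) -
        (x ^ (n + 3) * quarticWeight s x + s * (x ^ (n + 1) * quarticWeight s x))) x := by
  refine ((hasDerivAt_rpow_const (p := n) (Or.inl hx.ne')).mul
    (hasDerivAt_quarticWeight s x)).congr_deriv ?_
  rw [rpow_add hx, rpow_add hx, rpow_ofNat, rpow_one]
  ring

/-- The integration-by-parts identity `n · I_{n-1}(s) = I_{n+3}(s) + s · I_{n+1}(s)`. -/
theorem integration_by_parts_identity (n : ℝ) (hn : 0 < n) (s : ℝ) :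
    n * I (n - 1) s = I (n + 3) s + s * I (n + 1) s := by
  have hint : ∀ k : ℝ, -1 < k → IntegrableOn (fun x => x ^ k * quarticWeight s x) (Ioi 0) :=
    fun k hk => integrableOn_rpow_mul_quarticWeight hk s
  have h_sub_one := (hint (n - 1) (by linarith)).const_mul n
  have h_add_one := (hint (n + 1) (by linarith)).const_mul s
  have h_add_three := hint (n + 3) (by linarith)
  have hcont : ContinuousWithinAt (fun y => y ^ n * quarticWeight s y) (Ici 0) 0 :=
    ((continuousAt_rpow_const 0 n (Or.inr hn.le)).mul
      (continuous_quarticWeight s).continuousAt).continuousWithinAt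
  have hvanish := integral_Ioi_eq_zero_of_hasDerivAt_of_integrableOn hcont
    (by simp [zero_rpow hn.ne']) (fun x hx => hasDerivAt_rpow_mul_quarticWeight n s hx)
    (h_sub_one.sub (h_add_three.add h_add_one)) (hint n (by linarith))
  rwa [integral_sub h_sub_one (by exact h_add_three.add h_add_one),
    integral_add h_add_three h_add_one, integral_const_mul, integral_const_mul,
    sub_eq_zero] at hvanish
end

section
/- For every real k > −1: (i) lim_{s→+∞} s^{(k+1)/2} · I_k(s) = 2^{(k−1)/2} Γ((k+1)/2), and (ii) lim_{s→−∞} |s|^{−(k−1)/2} e^{−s²/4} · I_k(s) = √π. -/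
/-!
For `s → +∞` the substitution `x = y / √s` gives
`s^{(k+1)/2} I_k(s) = ∫₀^∞ y^k e^{-y⁴/(4s²) - y²/2} dy`, and dominated convergence leaves
the Gamma integral `∫₀^∞ y^k e^{-y²/2} dy`.

For `s = -2t → -∞` the substitution `x² = 2(t + v)` completes the square:
`(2t)^{-a} e^{-t²} I_k(-2t) = ∫_{-t}^∞ (1 + v/t)^a e^{-v²} dv` with `a = (k-1)/2`.
On `v > -t/2` the factor `(1 + v/t)^a` is at most `e^{2|a||v|}`, so dominated convergence
gives `∫ e^{-v²} = √π`. On `(-t, -t/2]`, where the factor may be singular, `e^{-v²} ≤ e^{-t²/4}`,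
so that piece is `O(t e^{-t²/4})`.
-/

open MeasureTheory

open Set Filter Real Topology

theorem integral_rpow_mul_exp_neg_sq_div_two {k : ℝ} (hk : -1 < k) :
    ∫ y in Ioi (0 : ℝ), y ^ k * exp (-y ^ 2 / 2) = 2 ^ ((k - 1) / 2) * Gamma ((k + 1) / 2) := by
  simp_rw [show ∀ y : ℝ, -y ^ 2 / 2 = -(1 / 2) * y ^ (2 : ℝ) by intro y; rw [rpow_two]; ring]
  rw [integral_rpow_mul_exp_neg_mul_rpow two_pos hk one_half_pos, one_div, inv_rpow zero_le_two,
    ← rpow_neg zero_le_two, ← rpow_neg_one, ← rpow_add two_pos]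
  ring_nf

theorem rpow_mul_I_eq_integral {k s : ℝ} (hs : 0 < s) :
    s ^ ((k + 1) / 2) * I k s =
      ∫ y in Ioi (0 : ℝ), y ^ k * exp (-y ^ 4 / (4 * s ^ 2) - y ^ 2 / 2) := by
  obtain ⟨r, hr, rfl⟩ : ∃ r, 0 < r ∧ s = r ^ 2 := ⟨√s, by positivity, (sq_sqrt hs.le).symm⟩
  have hsub := integral_comp_mul_left_Ioi
    (fun x => x ^ k * exp (-x ^ 4 / 4 - r ^ 2 * x ^ 2 / 2)) 0 (inv_pos.mpr hr)
  simp only [mul_zero, inv_inv, smul_eq_mul] at hsub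
  have hpt : ∀ y ∈ Ioi (0 : ℝ), y ^ k * exp (-y ^ 4 / (4 * (r ^ 2) ^ 2) - y ^ 2 / 2) =
      r ^ k * ((r⁻¹ * y) ^ k * exp (-(r⁻¹ * y) ^ 4 / 4 - r ^ 2 * (r⁻¹ * y) ^ 2 / 2)) := by
    intro y hy
    rw [mul_rpow (inv_nonneg.mpr hr.le) (le_of_lt hy), inv_rpow hr.le, ← mul_assoc, ← mul_assoc,
      mul_inv_cancel₀ (rpow_pos_of_pos hr k).ne', one_mul]
    congr 2
    field_simp
  rw [setIntegral_congr_fun measurableSet_Ioi hpt, integral_const_mul, hsub, I,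
    ← rpow_natCast, ← rpow_mul hr.le, ← mul_assoc, ← rpow_add_one hr.ne']
  congr 2
  push_cast
  ring

theorem tendsto_integral_rpow_mul_exp_neg_quartic {k : ℝ} (hk : -1 < k) :
    Tendsto (fun s => ∫ y in Ioi (0 : ℝ), y ^ k * exp (-y ^ 4 / (4 * s ^ 2) - y ^ 2 / 2)) atTop
      (𝓝 (∫ y in Ioi (0 : ℝ), y ^ k * exp (-y ^ 2 / 2))) := by
  have hint : IntegrableOn (fun y : ℝ => y ^ k * exp (-y ^ 2 / 2)) (Ioi 0) := by
    simpa only [neg_mul, one_div, ← neg_div, inv_mul_eq_div]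
      using integrableOn_rpow_mul_exp_neg_mul_sq one_half_pos hk
  refine tendsto_integral_filter_of_dominated_convergence _
    (Eventually.of_forall fun s => by fun_prop) ?_ hint ?_
  · refine Eventually.of_forall fun s => (ae_restrict_iff' measurableSet_Ioi).mpr <|
      ae_of_all _ fun y (hy : 0 < y) => ?_
    rw [norm_of_nonneg (by positivity)]
    gcongr
    have : 0 ≤ y ^ 4 / (4 * s ^ 2) := by positivity
    linarith [neg_div (4 * s ^ 2) (y ^ 4)]
  · refine ae_of_all _ fun y => ?_
    have hquartic : Tendsto (fun s : ℝ => -y ^ 4 / (4 * s ^ 2)) atTop (𝓝 0) :=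
      tendsto_const_nhds.div_atTop <| (tendsto_pow_atTop two_ne_zero).const_mul_atTop four_pos
    simpa [neg_div] using ((hquartic.sub_const (y ^ 2 / 2)).rexp).const_mul (y ^ k)

theorem tendsto_rpow_mul_I_atTop {k : ℝ} (hk : -1 < k) :
    Tendsto (fun s => s ^ ((k + 1) / 2) * I k s) atTop
      (𝓝 (2 ^ ((k - 1) / 2) * Gamma ((k + 1) / 2))) := by
  rw [← integral_rpow_mul_exp_neg_sq_div_two hk]
  refine (tendsto_integral_rpow_mul_exp_neg_quartic hk).congr' ?_
  filter_upwards [eventually_gt_atTop 0] with s hs using (rpow_mul_I_eq_integral hs).symm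

theorem one_add_div_nonneg {t v : ℝ} (ht : 0 < t) (hv : -t ≤ v) : 0 ≤ 1 + v / t := by
  rw [one_add_div ht.ne']
  exact div_nonneg (by linarith) ht.le

theorem I_eq_integral_sq (k s : ℝ) :
    I k s = 2⁻¹ * ∫ y in Ioi (0 : ℝ), y ^ ((k - 1) / 2) * exp (-y ^ 2 / 4 - s * y / 2) := by
  rw [← integral_comp_rpow_Ioi_of_pos two_pos, ← integral_const_mul, I]
  refine setIntegral_congr_fun measurableSet_Ioi fun x (hx : 0 < x) => ?_
  rw [smul_eq_mul, ← rpow_mul hx.le, ← mul_assoc, ← mul_assoc, inv_mul_cancel_left₀ two_ne_zero,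
    ← rpow_add hx, rpow_two]
  ring_nf

theorem integral_Ioi_comp_mul_add {E : Type*} [NormedAddCommGroup E] [NormedSpace ℝ E]
    (g : ℝ → E) {c : ℝ} (hc : 0 < c) (d : ℝ) :
    ∫ v in Ioi (-d), g (c * (v + d)) = c⁻¹ • ∫ y in Ioi 0, g y := by
  have hshift := (measurePreserving_add_right volume d).setIntegral_preimage_emb
    (measurableEmbedding_addRight d) (fun w => g (c * w)) (Ioi 0)
  rw [preimage_add_const_Ioi, zero_sub] at hshift
  rw [hshift, integral_comp_mul_left_Ioi g 0 hc, mul_zero]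

theorem rpow_mul_exp_mul_I_eq_integral {k t : ℝ} (ht : 0 < t) :
    (2 * t) ^ (-((k - 1) / 2)) * exp (-t ^ 2) * I k (-(2 * t)) =
      ∫ v in Ioi (-t), (1 + v / t) ^ ((k - 1) / 2) * exp (-v ^ 2) := by
  rw [I_eq_integral_sq, ← smul_eq_mul (2 : ℝ)⁻¹, ← integral_Ioi_comp_mul_add _ two_pos t,
    ← integral_const_mul]
  refine setIntegral_congr_fun measurableSet_Ioi fun v (hv : -t < v) => ?_
  have hrpow : (2 * (v + t)) ^ ((k - 1) / 2) =
      (2 * t) ^ ((k - 1) / 2) * (1 + v / t) ^ ((k - 1) / 2) := by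
    rw [← mul_rpow (by positivity) (one_add_div_nonneg ht hv.le)]
    congr 1
    field_simp
    ring
  have hexp : -t ^ 2 + (-(2 * (v + t)) ^ 2 / 4 - -(2 * t) * (2 * (v + t)) / 2) = -v ^ 2 := by ring
  rw [hrpow, rpow_neg (by positivity), ← hexp, exp_add]
  field_simp

theorem abs_log_le_two_mul_abs_sub_one {r : ℝ} (hr : 1 / 2 ≤ r) : |log r| ≤ 2 * |r - 1| := by
  have hr0 : 0 < r := by linarith
  have hinv : r⁻¹ ≤ 2 := by rw [inv_le_comm₀ hr0 two_pos]; linarith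
  rw [abs_le]
  constructor
  · have hlog := one_sub_inv_le_log_of_pos hr0
    have : 1 - r⁻¹ = (r - 1) * r⁻¹ := by field_simp
    nlinarith [neg_abs_le (r - 1), abs_nonneg (r - 1), inv_pos.2 hr0]
  · linarith [log_le_sub_one_of_pos hr0, le_abs_self (r - 1), abs_nonneg (r - 1)]

theorem rpow_le_exp_two_mul_abs_mul_abs_sub_one {r : ℝ} (hr : 1 / 2 ≤ r) (a : ℝ) :
    r ^ a ≤ exp (2 * |a| * |r - 1|) := by
  rw [rpow_def_of_pos (by linarith)]
  refine exp_le_exp.mpr ?_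
  calc log r * a ≤ |log r| * |a| := (le_abs_self _).trans (abs_mul _ _).le
    _ ≤ 2 * |r - 1| * |a| := by gcongr; exact abs_log_le_two_mul_abs_sub_one hr
    _ = 2 * |a| * |r - 1| := by ring

theorem norm_one_add_div_rpow_mul_exp_neg_sq_le {t v : ℝ} (ht : 1 ≤ t) (hv : -t / 2 < v)
    (a : ℝ) :
    ‖(1 + v / t) ^ a * exp (-v ^ 2)‖ ≤ exp (2 * a ^ 2) * exp (-(1 / 2) * v ^ 2) := by
  have ht0 : 0 < t := by linarith
  have hr : 1 / 2 ≤ 1 + v / t := by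
    have : -(1 / 2) < v / t := by rw [lt_div_iff₀ ht0]; linarith
    linarith
  have hdist : |1 + v / t - 1| ≤ |v| := by
    rw [add_sub_cancel_left, abs_div, abs_of_pos ht0]
    exact div_le_self (abs_nonneg v) ht
  rw [norm_of_nonneg (by have := rpow_nonneg (by linarith : (0 : ℝ) ≤ 1 + v / t) a; positivity)]
  calc (1 + v / t) ^ a * exp (-v ^ 2) ≤ exp (2 * |a| * |v|) * exp (-v ^ 2) := by
        gcongr
        exact (rpow_le_exp_two_mul_abs_mul_abs_sub_one hr a).trans (by gcongr)
    _ ≤ exp (2 * a ^ 2) * exp (-(1 / 2) * v ^ 2) := by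
        rw [← exp_add, ← exp_add, exp_le_exp]
        nlinarith [sq_nonneg (2 * |a| - |v|), sq_abs a, sq_abs v]

theorem integrableOn_Ioi_one_add_div_rpow_mul_exp_neg_sq {t : ℝ} (ht : 1 ≤ t) (a : ℝ) :
    IntegrableOn (fun v => (1 + v / t) ^ a * exp (-v ^ 2)) (Ioi (-t / 2)) := by
  refine ((integrable_exp_neg_mul_sq one_half_pos).const_mul (exp (2 * a ^ 2))).integrableOn.mono'
    (by fun_prop) ((ae_restrict_iff' measurableSet_Ioi).mpr <|
      ae_of_all _ fun v hv => norm_one_add_div_rpow_mul_exp_neg_sq_le ht hv a)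

theorem tendsto_integral_Ioi_neg_half_one_add_div_rpow_mul_exp_neg_sq (a : ℝ) :
    Tendsto (fun t => ∫ v in Ioi (-t / 2), (1 + v / t) ^ a * exp (-v ^ 2)) atTop
      (𝓝 √π) := by
  have hgauss : ∫ v, exp (-v ^ 2) = √π := by simpa using integral_gaussian 1
  simp_rw [← hgauss, ← integral_indicator measurableSet_Ioi]
  refine tendsto_integral_filter_of_dominated_convergence _
    (Eventually.of_forall fun t =>
      (Measurable.indicator (by fun_prop) measurableSet_Ioi).aestronglyMeasurable)
    ?_ ((integrable_exp_neg_mul_sq one_half_pos).const_mul (exp (2 * a ^ 2))) ?_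
  · filter_upwards [eventually_ge_atTop 1] with t ht
    refine ae_of_all _ fun v => ?_
    rw [norm_indicator_eq_indicator_norm]
    exact indicator_apply_le' (norm_one_add_div_rpow_mul_exp_neg_sq_le ht · a)
      fun _ => by positivity
  · refine ae_of_all _ fun v => ?_
    have hratio : Tendsto (fun t : ℝ => 1 + v / t) atTop (𝓝 1) := by
      simpa using (tendsto_const_nhds (x := v)).div_atTop tendsto_id |>.const_add 1
    have hlim := (hratio.rpow_const (p := a) (Or.inl one_ne_zero)).mul_const (exp (-v ^ 2))
    rw [one_rpow, one_mul] at hlim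
    refine hlim.congr' ?_
    filter_upwards [eventually_gt_atTop (-2 * v)] with t ht
    rw [indicator_of_mem (by simp only [mem_Ioi]; linarith)]

theorem intervalIntegrable_one_add_div_rpow {a t : ℝ} (ha : -1 < a) (ht : t ≠ 0) (b c : ℝ) :
    IntervalIntegrable (fun v => (1 + v / t) ^ a) volume b c := by
  have h := ((intervalIntegral.intervalIntegrable_rpow' ha (a := b / t + 1)
    (b := c / t + 1)).comp_add_right 1).comp_mul_left (c := t⁻¹)
  simp only [add_sub_cancel_right, div_inv_eq_mul, div_mul_cancel₀ _ ht] at h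
  simpa [add_comm, div_eq_inv_mul] using h

theorem integrableOn_Ioc_one_add_div_rpow_mul_exp_neg_sq {a t : ℝ} (ha : -1 < a) (ht : t ≠ 0)
    (b c : ℝ) : IntegrableOn (fun v => (1 + v / t) ^ a * exp (-v ^ 2)) (Ioc b c) :=
  ((intervalIntegrable_one_add_div_rpow ha ht b c).mul_continuousOn (by fun_prop)).1

theorem integral_Ioc_one_add_div_rpow_mul_exp_neg_sq_le {a t : ℝ} (ha : -1 < a) (ht : 0 < t) :
    ∫ v in Ioc (-t) (-t / 2), (1 + v / t) ^ a * exp (-v ^ 2) ≤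
      t * exp (-(1 / 4) * t ^ 2) * ∫ u in (0 : ℝ)..1 / 2, u ^ a := by
  have hint := (intervalIntegrable_one_add_div_rpow ha ht.ne' (-t) (-t / 2)).1
  have hpt : ∀ v ∈ Ioc (-t) (-t / 2),
      (1 + v / t) ^ a * exp (-v ^ 2) ≤ exp (-(1 / 4) * t ^ 2) * (1 + v / t) ^ a := by
    rintro v ⟨hlo, hhi⟩
    have := one_add_div_nonneg ht hlo.le
    rw [mul_comm]
    gcongr
    nlinarith
  calc ∫ v in Ioc (-t) (-t / 2), (1 + v / t) ^ a * exp (-v ^ 2)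
      ≤ ∫ v in Ioc (-t) (-t / 2), exp (-(1 / 4) * t ^ 2) * (1 + v / t) ^ a :=
        setIntegral_mono_on (integrableOn_Ioc_one_add_div_rpow_mul_exp_neg_sq ha ht.ne' _ _)
          (hint.const_mul _) measurableSet_Ioc hpt
    _ = exp (-(1 / 4) * t ^ 2) * ∫ v in (-t)..(-t / 2), (v / t + 1) ^ a := by
        rw [integral_const_mul, intervalIntegral.integral_of_le (by linarith)]
        simp_rw [add_comm]
    _ = t * exp (-(1 / 4) * t ^ 2) * ∫ u in (0 : ℝ)..1 / 2, u ^ a := by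
        rw [intervalIntegral.integral_comp_div_add (fun u => u ^ a) ht.ne', smul_eq_mul]
        field_simp
        norm_num

theorem tendsto_integral_Ioc_one_add_div_rpow_mul_exp_neg_sq {a : ℝ} (ha : -1 < a) :
    Tendsto (fun t => ∫ v in Ioc (-t) (-t / 2), (1 + v / t) ^ a * exp (-v ^ 2)) atTop
      (𝓝 0) := by
  have hdecay : Tendsto (fun t : ℝ => t * exp (-(1 / 4) * t ^ 2)) atTop (𝓝 0) := by
    refine ((tendsto_rpow_abs_mul_exp_neg_mul_sq_cocompact (a := 1 / 4) (by norm_num) 1)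
      |>.mono_left atTop_le_cocompact).congr' ?_
    filter_upwards [eventually_ge_atTop 0] with t ht
    rw [rpow_one, abs_of_nonneg ht]
  have hupper := hdecay.mul_const (∫ u in (0 : ℝ)..1 / 2, u ^ a)
  rw [zero_mul] at hupper
  refine tendsto_of_tendsto_of_tendsto_of_le_of_le' tendsto_const_nhds hupper ?_ ?_
  · filter_upwards [eventually_gt_atTop 0] with t ht
    refine setIntegral_nonneg measurableSet_Ioc fun v ⟨hlo, _⟩ => ?_
    have := rpow_nonneg (one_add_div_nonneg ht hlo.le) a
    positivity
  · filter_upwards [eventually_gt_atTop 0] with t ht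
    exact integral_Ioc_one_add_div_rpow_mul_exp_neg_sq_le ha ht

theorem tendsto_integral_Ioi_one_add_div_rpow_mul_exp_neg_sq {a : ℝ} (ha : -1 < a) :
    Tendsto (fun t => ∫ v in Ioi (-t), (1 + v / t) ^ a * exp (-v ^ 2)) atTop (𝓝 √π) := by
  have hsum := (tendsto_integral_Ioc_one_add_div_rpow_mul_exp_neg_sq ha).add
    (tendsto_integral_Ioi_neg_half_one_add_div_rpow_mul_exp_neg_sq a)
  rw [zero_add] at hsum
  refine hsum.congr' ?_
  filter_upwards [eventually_ge_atTop 1] with t ht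
  rw [← Ioc_union_Ioi_eq_Ioi (by linarith : -t ≤ -t / 2), setIntegral_union
    (Ioc_disjoint_Ioi le_rfl) measurableSet_Ioi
    (integrableOn_Ioc_one_add_div_rpow_mul_exp_neg_sq ha (by linarith) _ _)
    (integrableOn_Ioi_one_add_div_rpow_mul_exp_neg_sq ht a)]

theorem tendsto_abs_rpow_mul_exp_mul_I_atBot {k : ℝ} (hk : -1 < k) :
    Tendsto (fun s => |s| ^ (-((k - 1) / 2)) * exp (-s ^ 2 / 4) * I k s) atBot (𝓝 √π) := by
  have h := (tendsto_integral_Ioi_one_add_div_rpow_mul_exp_neg_sq (a := (k - 1) / 2)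
    (by linarith)).comp (tendsto_neg_atBot_atTop.atTop_div_const two_pos)
  refine h.congr' ?_
  filter_upwards [eventually_lt_atBot 0] with s hs
  rw [Function.comp_apply, ← rpow_mul_exp_mul_I_eq_integral (by linarith), abs_of_neg hs]
  ring_nf

/-- Asymptotics of `I_k`: as `s → +∞`, `s^{(k+1)/2} I_k(s) → 2^{(k-1)/2} Γ((k+1)/2)`;
as `s → -∞`, `|s|^{-(k-1)/2} e^{-s²/4} I_k(s) → √π`. -/
theorem I_asymptotics (k : ℝ) (hk : -1 < k) :
    Filter.Tendsto (fun s : ℝ => s ^ ((k + 1) / 2) * I k s) Filter.atTop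
      (nhds ((2 : ℝ) ^ ((k - 1) / 2) * Real.Gamma ((k + 1) / 2))) ∧
    Filter.Tendsto (fun s : ℝ => |s| ^ (-((k - 1) / 2)) * Real.exp (-s ^ 2 / 4) * I k s)
      Filter.atBot (nhds (Real.sqrt Real.pi)) :=
  ⟨tendsto_rpow_mul_I_atTop hk, tendsto_abs_rpow_mul_exp_mul_I_atBot hk⟩
end

section
/- For all reals n > 0 and k > 0: (i) lim_{s→+∞} (s/2)^{k/2} · Σ_{n,k}(s) = Γ((n+k)/2) / Γ(n/2), and (ii) lim_{s→−∞} |s|^{−k/2} · Σ_{n,k}(s) = 1. -/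
/-!
Substituting `x = √y` gives `I k s = J ((k + 1) / 2) s / 2`, where `J = gaussLaplace`,
`J a s = ∫₀^∞ y^(a-1) e^(-y²/4 - s y/2) dy`, so `Sig n k = J ((n + k) / 2) / J (n / 2)` and both
limits are ratios of one-variable asymptotics of `J a`.

As `s → +∞`, the rescaling `y = 2t/s` gives `(s/2)^a J a s = ∫₀^∞ t^(a-1) e^(-(t/s)² - t) dt`,
which tends to `Γ(a)` by dominated convergence.

As `s = -σ → -∞`, completing the square gives
`J a (-σ) = e^(σ²/4) σ^(a-1) ∫₀^∞ (y/σ)^(a-1) e^(-(y-σ)²/4) dy`. The last integral tends to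
`∫ e^(-u²/4) du = 2√π`: over `(0, σ/2]` the Gaussian factor is at most `e^(-σ)` (for `σ ≥ 16`),
and over `(σ/2, ∞)` the shift `y = u + σ` makes dominated convergence applicable, because there
`y/σ = 1 + u/σ` lies in `[1/2, 1 + |u|]` (for `σ ≥ 1`).
-/

open MeasureTheory

/-- The moment `Σ_{n,k}(s) = I_{k+n-1}(s) / I_{n-1}(s)`. -/
noncomputable def Sig (n k s : ℝ) : ℝ := I (k + n - 1) s / I (n - 1) s

open Set Real Filter
open scoped Topology

noncomputable def gaussLaplace (a s : ℝ) : ℝ :=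
  ∫ y in Ioi 0, y ^ (a - 1) * exp (-y ^ 2 / 4 - s * y / 2)

theorem I_eq_gaussLaplace (k s : ℝ) : I k s = gaussLaplace ((k + 1) / 2) s / 2 := by
  rw [I, ← integral_comp_rpow_Ioi_of_pos (one_half_pos : (0:ℝ) < 1 / 2), gaussLaplace,
    ← integral_div]
  refine setIntegral_congr_fun measurableSet_Ioi fun y (hy : 0 < y) => ?_
  have hsq : (y ^ (1 / 2 : ℝ)) ^ 2 = y := by
    rw [← rpow_mul_natCast hy.le]; norm_num
  have hpow : y ^ (1 / 2 - 1 : ℝ) * (y ^ (1 / 2 : ℝ)) ^ k = y ^ ((k + 1) / 2 - 1) := by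
    rw [← rpow_mul hy.le, ← rpow_add hy]; ring_nf
  rw [smul_eq_mul, show (y ^ (1 / 2 : ℝ)) ^ 4 = ((y ^ (1 / 2 : ℝ)) ^ 2) ^ 2 by ring, hsq, ← hpow]
  ring

theorem Sig_eq_gaussLaplace_div (n k s : ℝ) :
    Sig n k s = gaussLaplace ((n + k) / 2) s / gaussLaplace (n / 2) s := by
  rw [Sig, I_eq_gaussLaplace, I_eq_gaussLaplace, div_div_div_cancel_right₀ two_ne_zero]
  ring_nf

theorem integrableOn_gaussLaplace {a : ℝ} (ha : 0 < a) (s : ℝ) :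
    IntegrableOn (fun y => y ^ (a - 1) * exp (-y ^ 2 / 4 - s * y / 2)) (Ioi 0) := by
  refine ((integrableOn_rpow_mul_exp_neg_mul_sq (b := 1 / 8) (s := a - 1) (by norm_num)
    (by linarith)).const_mul (exp (s ^ 2 / 2))).mono' (by fun_prop) ?_
  filter_upwards [ae_restrict_mem measurableSet_Ioi] with y (hy : 0 < y)
  rw [norm_of_nonneg (by positivity), mul_left_comm, ← exp_add]
  exact mul_le_mul_of_nonneg_left (exp_le_exp.mpr (by nlinarith [sq_nonneg (y + 2 * s)]))
    (by positivity)

theorem rpow_mul_gaussLaplace {s : ℝ} (hs : 0 < s) (a : ℝ) :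
    (s / 2) ^ a * gaussLaplace a s = ∫ t in Ioi 0, t ^ (a - 1) * exp (-(t / s) ^ 2 - t) := by
  have hscale := integral_comp_mul_left_Ioi
    (fun y => y ^ (a - 1) * exp (-y ^ 2 / 4 - s * y / 2)) 0 (div_pos two_pos hs)
  rw [mul_zero, inv_div, smul_eq_mul, ← gaussLaplace] at hscale
  calc (s / 2) ^ a * gaussLaplace a s = (s / 2) ^ (a - 1) * (s / 2 * gaussLaplace a s) := by
        rw [← mul_assoc, ← rpow_add_one (by positivity), sub_add_cancel]
    _ = (s / 2) ^ (a - 1) * ((2 / s) ^ (a - 1) *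
          ∫ t in Ioi 0, t ^ (a - 1) * exp (-(t / s) ^ 2 - t)) := by
        rw [← hscale, ← integral_const_mul ((2 / s) ^ (a - 1))]
        congr 1
        refine setIntegral_congr_fun measurableSet_Ioi fun t (ht : 0 < t) => ?_
        rw [mul_rpow (by positivity) ht.le]
        field_simp
        ring_nf
    _ = ∫ t in Ioi 0, t ^ (a - 1) * exp (-(t / s) ^ 2 - t) := by
        rw [← mul_assoc, ← mul_rpow (by positivity) (by positivity),
          div_mul_div_cancel₀ two_ne_zero, div_self hs.ne', one_rpow, one_mul]

theorem tendsto_integral_rpow_mul_exp_neg_sq_div_sub {a : ℝ} (ha : 0 < a) :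
    Tendsto (fun s => ∫ t in Ioi 0, t ^ (a - 1) * exp (-(t / s) ^ 2 - t)) atTop
      (𝓝 (Gamma a)) := by
  rw [Gamma_eq_integral ha]
  refine tendsto_integral_filter_of_dominated_convergence (fun t => exp (-t) * t ^ (a - 1))
    (Eventually.of_forall fun s => by fun_prop) ?_ ?_ ?_
  · refine Eventually.of_forall fun s => ?_
    filter_upwards [ae_restrict_mem measurableSet_Ioi] with t (ht : 0 < t)
    rw [norm_of_nonneg (by positivity), mul_comm (exp _)]
    exact mul_le_mul_of_nonneg_left (exp_le_exp.mpr (by nlinarith [sq_nonneg (t / s)]))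
      (by positivity)
  · exact GammaIntegral_convergent ha
  · refine Eventually.of_forall fun t => ?_
    have hquot : Tendsto (fun s => t / s) atTop (𝓝 0) := tendsto_const_nhds.div_atTop tendsto_id
    simpa [mul_comm (exp _)] using
      ((continuous_exp.tendsto _).comp ((hquot.pow 2).neg.sub_const t)).const_mul (t ^ (a - 1))

theorem tendsto_rpow_mul_gaussLaplace_atTop {a : ℝ} (ha : 0 < a) :
    Tendsto (fun s => (s / 2) ^ a * gaussLaplace a s) atTop (𝓝 (Gamma a)) :=
  (tendsto_integral_rpow_mul_exp_neg_sq_div_sub ha).congr' <|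
    (eventually_gt_atTop 0).mono fun _ hs => (rpow_mul_gaussLaplace hs a).symm

theorem gaussLaplace_integrand_neg_eq {σ y : ℝ} (hσ : 0 < σ) (hy : 0 < y) (a : ℝ) :
    y ^ (a - 1) * exp (-y ^ 2 / 4 - -σ * y / 2) =
      exp (σ ^ 2 / 4) * σ ^ (a - 1) * ((y / σ) ^ (a - 1) * exp (-(y - σ) ^ 2 / 4)) := by
  have hσa : σ ^ (a - 1) ≠ 0 := by positivity
  rw [div_rpow hy.le hσ.le]
  field_simp
  rw [← exp_add]
  ring_nf

theorem gaussLaplace_neg {σ : ℝ} (hσ : 0 < σ) (a : ℝ) :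
    gaussLaplace a (-σ) = exp (σ ^ 2 / 4) * σ ^ (a - 1) *
      ∫ y in Ioi 0, (y / σ) ^ (a - 1) * exp (-(y - σ) ^ 2 / 4) := by
  rw [gaussLaplace, ← integral_const_mul]
  exact setIntegral_congr_fun measurableSet_Ioi fun y hy => gaussLaplace_integrand_neg_eq hσ hy a

theorem integrableOn_div_rpow_mul_exp {a σ : ℝ} (ha : 0 < a) (hσ : 0 < σ) :
    IntegrableOn (fun y => (y / σ) ^ (a - 1) * exp (-(y - σ) ^ 2 / 4)) (Ioi 0) := by
  refine IntegrableOn.congr_fun ((integrableOn_gaussLaplace ha (-σ)).const_mul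
    (exp (σ ^ 2 / 4) * σ ^ (a - 1))⁻¹) (fun y hy => ?_) measurableSet_Ioi
  rw [gaussLaplace_integrand_neg_eq hσ hy a, inv_mul_cancel_left₀ (by positivity)]

theorem integral_div_rpow_sub_one {a : ℝ} (ha : 0 < a) {b : ℝ} (hb : b ≠ 0) (x : ℝ) :
    ∫ y in 0..x, (y / b) ^ (a - 1) = b * ((x / b) ^ a / a) := by
  rw [intervalIntegral.integral_comp_div (fun y => y ^ (a - 1)) hb,
    integral_rpow (Or.inl (by linarith)), sub_add_cancel, zero_div, zero_rpow ha.ne', sub_zero,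
    smul_eq_mul]

theorem tendsto_setIntegral_Ioc_div_rpow_mul_exp {a : ℝ} (ha : 0 < a) :
    Tendsto (fun σ => ∫ y in Ioc 0 (σ / 2), (y / σ) ^ (a - 1) * exp (-(y - σ) ^ 2 / 4)) atTop
      (𝓝 0) := by
  have hbound : Tendsto (fun σ : ℝ => (1 / 2) ^ a / a * (σ ^ 1 * exp (-σ))) atTop (𝓝 0) := by
    simpa using (tendsto_pow_mul_exp_neg_atTop_nhds_zero 1).const_mul ((1 / 2 : ℝ) ^ a / a)
  refine squeeze_zero' ?_ ?_ hbound
  · filter_upwards [eventually_gt_atTop 0] with σ hσ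
    exact setIntegral_nonneg measurableSet_Ioc fun y ⟨hy0, _⟩ => by positivity
  · filter_upwards [eventually_ge_atTop 16] with σ hσ
    have hσ0 : (0 : ℝ) < σ := by linarith
    have hint : IntegrableOn (fun y => (y / σ) ^ (a - 1)) (Ioc 0 (σ / 2)) := by
      refine Integrable.of_integral_ne_zero ?_
      rw [← intervalIntegral.integral_of_le (by positivity), integral_div_rpow_sub_one ha hσ0.ne']
      positivity
    calc ∫ y in Ioc 0 (σ / 2), (y / σ) ^ (a - 1) * exp (-(y - σ) ^ 2 / 4)
        ≤ ∫ y in Ioc 0 (σ / 2), (y / σ) ^ (a - 1) * exp (-σ) := by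
          refine setIntegral_mono_on ((integrableOn_div_rpow_mul_exp ha hσ0).mono_set
            Ioc_subset_Ioi_self) (hint.mul_const _) measurableSet_Ioc fun y ⟨hy0, hyσ⟩ => ?_
          gcongr
          nlinarith
      _ = (1 / 2) ^ a / a * (σ ^ 1 * exp (-σ)) := by
          rw [integral_mul_const, ← intervalIntegral.integral_of_le (by positivity),
            integral_div_rpow_sub_one ha hσ0.ne', div_div_cancel_left' hσ0.ne', pow_one, one_div]
          ring

theorem rpow_le_two_rpow_abs_mul_exp {x t : ℝ} (c : ℝ) (ht : 0 ≤ t) (hx : 1 / 2 ≤ x)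
    (hxt : x ≤ 1 + t) : x ^ c ≤ 2 ^ |c| * exp (|c| * t) := by
  rcases le_or_gt 0 c with hc | hc
  · rw [abs_of_nonneg hc]
    calc x ^ c ≤ exp t ^ c := rpow_le_rpow (by linarith) (by linarith [add_one_le_exp t]) hc
      _ = exp (c * t) := by rw [← exp_mul, mul_comm]
      _ ≤ 2 ^ c * exp (c * t) := le_mul_of_one_le_left (exp_pos _).le (one_le_rpow one_le_two hc)
  · rw [abs_of_neg hc]
    calc x ^ c ≤ (1 / 2) ^ c := rpow_le_rpow_of_nonpos (by norm_num) hx hc.le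
      _ = 2 ^ (-c) := by rw [one_div, inv_rpow zero_le_two, rpow_neg zero_le_two]
      _ ≤ 2 ^ (-c) * exp (-c * t) :=
          le_mul_of_one_le_right (by positivity) (one_le_exp (by nlinarith))

theorem rpow_mul_exp_neg_sq_le {x u : ℝ} (c : ℝ) (hx : 1 / 2 ≤ x) (hxu : x ≤ 1 + |u|) :
    x ^ c * exp (-u ^ 2 / 4) ≤ 2 ^ |c| * exp (2 * c ^ 2) * exp (-(1 / 8) * u ^ 2) := by
  calc x ^ c * exp (-u ^ 2 / 4) ≤ 2 ^ |c| * exp (|c| * |u|) * exp (-u ^ 2 / 4) := by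
        gcongr
        exact rpow_le_two_rpow_abs_mul_exp c (abs_nonneg u) hx hxu
    _ = 2 ^ |c| * exp (|c| * |u| - u ^ 2 / 4) := by rw [mul_assoc, ← exp_add]; ring_nf
    _ ≤ 2 ^ |c| * exp (2 * c ^ 2 - 1 / 8 * u ^ 2) :=
        mul_le_mul_of_nonneg_left (exp_le_exp.mpr
          (by nlinarith [sq_nonneg (|u| - 4 * |c|), sq_abs u, sq_abs c])) (by positivity)
    _ = 2 ^ |c| * exp (2 * c ^ 2) * exp (-(1 / 8) * u ^ 2) := by
        rw [mul_assoc, ← exp_add]; ring_nf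

theorem integral_exp_neg_sq_div_four : ∫ u : ℝ, exp (-u ^ 2 / 4) = 2 * √π := by
  calc ∫ u : ℝ, exp (-u ^ 2 / 4) = ∫ u : ℝ, exp (-(1 / 4) * u ^ 2) := by ring_nf
    _ = 2 * √π := by
      rw [integral_gaussian, show π / (1 / 4) = 2 ^ 2 * π by ring, sqrt_mul (by positivity),
        sqrt_sq zero_le_two]

theorem tendsto_setIntegral_Ioi_div_rpow_mul_exp (a : ℝ) :
    Tendsto (fun σ => ∫ y in Ioi (σ / 2), (y / σ) ^ (a - 1) * exp (-(y - σ) ^ 2 / 4)) atTop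
      (𝓝 (2 * √π)) := by
  set g : ℝ → ℝ → ℝ := fun σ y => (y / σ) ^ (a - 1) * exp (-(y - σ) ^ 2 / 4)
  have hshift : ∀ σ, ∫ y in Ioi (σ / 2), g σ y = ∫ u, (Ioi (σ / 2)).indicator (g σ) (u + σ) :=
    fun σ => by rw [← integral_indicator measurableSet_Ioi, integral_add_right_eq_self]
  rw [← integral_exp_neg_sq_div_four]
  refine Tendsto.congr (fun σ => (hshift σ).symm) ?_
  refine tendsto_integral_filter_of_dominated_convergence
    (fun u => 2 ^ |a - 1| * exp (2 * (a - 1) ^ 2) * exp (-(1 / 8) * u ^ 2))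
    (Eventually.of_forall fun σ => ?_) ?_
    ((integrable_exp_neg_mul_sq (by norm_num)).const_mul _) ?_
  · exact (((by fun_prop : Measurable (g σ)).indicator measurableSet_Ioi).comp
      (measurable_add_const σ)).aestronglyMeasurable
  · filter_upwards [eventually_ge_atTop 1] with σ hσ
    refine Eventually.of_forall fun u => ?_
    by_cases hu : u + σ ∈ Ioi (σ / 2)
    · have hu' : σ / 2 < u + σ := hu
      have hx : 1 / 2 ≤ (u + σ) / σ := by rw [le_div_iff₀ (by linarith)]; linarith
      have hxu : (u + σ) / σ ≤ 1 + |u| := by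
        rw [div_le_iff₀ (by linarith)]; nlinarith [le_abs_self u, abs_nonneg u]
      rw [indicator_of_mem hu, norm_of_nonneg (mul_nonneg (rpow_nonneg (by linarith) _)
        (exp_pos _).le), add_sub_cancel_right]
      exact rpow_mul_exp_neg_sq_le _ hx hxu
    · rw [indicator_of_notMem hu, norm_zero]
      positivity
  · refine Eventually.of_forall fun u => ?_
    have hlim : Tendsto (fun σ => (1 + u / σ) ^ (a - 1) * exp (-u ^ 2 / 4)) atTop
        (𝓝 (exp (-u ^ 2 / 4))) := by
      simpa using (((tendsto_const_nhds.div_atTop tendsto_id).const_add 1).rpow_const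
        (p := a - 1) (Or.inl (by norm_num))).mul_const (exp (-u ^ 2 / 4))
    refine hlim.congr' ?_
    filter_upwards [eventually_gt_atTop (2 * |u|)] with σ hσ
    have hu : u + σ ∈ Ioi (σ / 2) := by
      show σ / 2 < u + σ
      linarith [neg_abs_le u]
    simp only [indicator_of_mem hu, g, add_sub_cancel_right]
    rw [add_div, div_self (by linarith [abs_nonneg u]), add_comm 1]

theorem tendsto_integral_div_rpow_mul_exp {a : ℝ} (ha : 0 < a) :
    Tendsto (fun σ => ∫ y in Ioi 0, (y / σ) ^ (a - 1) * exp (-(y - σ) ^ 2 / 4)) atTop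
      (𝓝 (2 * √π)) := by
  rw [← zero_add (2 * √π)]
  refine ((tendsto_setIntegral_Ioc_div_rpow_mul_exp ha).add
    (tendsto_setIntegral_Ioi_div_rpow_mul_exp a)).congr' ?_
  filter_upwards [eventually_gt_atTop 0] with σ hσ
  have hint := integrableOn_div_rpow_mul_exp ha hσ
  rw [← setIntegral_union (Ioc_disjoint_Ioi le_rfl) measurableSet_Ioi
    (hint.mono_set Ioc_subset_Ioi_self) (hint.mono_set (Ioi_subset_Ioi (by positivity))),
    Ioc_union_Ioi_eq_Ioi (by positivity)]

theorem tendsto_gaussLaplace_atBot {a : ℝ} (ha : 0 < a) :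
    Tendsto (fun s => |s| ^ (1 - a) * exp (-s ^ 2 / 4) * gaussLaplace a s) atBot
      (𝓝 (2 * √π)) := by
  refine ((tendsto_integral_div_rpow_mul_exp ha).comp tendsto_neg_atBot_atTop).congr' ?_
  filter_upwards [eventually_lt_atBot 0] with s hs
  obtain ⟨σ, rfl⟩ : ∃ σ, s = -σ := ⟨-s, (neg_neg s).symm⟩
  have hσ : 0 < σ := neg_neg_iff_pos.mp hs
  have hpow : σ ^ (1 - a) * σ ^ (a - 1) = 1 := by rw [← rpow_add hσ]; simp
  have hexp : exp (-σ ^ 2 / 4) * exp (σ ^ 2 / 4) = 1 := by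
    rw [← exp_add, neg_div, neg_add_cancel, exp_zero]
  rw [Function.comp_apply, neg_neg, abs_neg, abs_of_pos hσ, neg_sq, gaussLaplace_neg hσ]
  calc _ = σ ^ (1 - a) * σ ^ (a - 1) * (exp (-σ ^ 2 / 4) * exp (σ ^ 2 / 4)) *
        ∫ y in Ioi 0, (y / σ) ^ (a - 1) * exp (-(y - σ) ^ 2 / 4) := by
          rw [hpow, hexp, one_mul, one_mul]
    _ = _ := by ring

theorem tendsto_div_mul_div_of_tendsto_mul {α : Type*} {l : Filter α} {u v A B : α → ℝ}
    {a b : ℝ} (hA : Tendsto (fun x => u x * A x) l (𝓝 a))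
    (hB : Tendsto (fun x => v x * B x) l (𝓝 b)) (hb : b ≠ 0) :
    Tendsto (fun x => u x / v x * (A x / B x)) l (𝓝 (a / b)) :=
  (hA.div hB hb).congr fun _ => mul_div_mul_comm _ _ _ _

/-- Asymptotics of the moments: as `s → +∞`, `(s/2)^{k/2} Σ_{n,k}(s) → Γ((n+k)/2)/Γ(n/2)`;
as `s → -∞`, `|s|^{-k/2} Σ_{n,k}(s) → 1`. -/
theorem Sigma_asymptotics (n k : ℝ) (hn : 0 < n) (hk : 0 < k) :
    Filter.Tendsto (fun s : ℝ => (s / 2) ^ (k / 2) * Sig n k s) Filter.atTop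
      (nhds (Real.Gamma ((n + k) / 2) / Real.Gamma (n / 2))) ∧
    Filter.Tendsto (fun s : ℝ => |s| ^ (-(k / 2)) * Sig n k s) Filter.atBot (nhds 1) := by
  have hn2 : 0 < n / 2 := by positivity
  have hnk2 : 0 < (n + k) / 2 := by positivity
  simp_rw [Sig_eq_gaussLaplace_div]
  constructor
  · refine (tendsto_div_mul_div_of_tendsto_mul (tendsto_rpow_mul_gaussLaplace_atTop hnk2)
      (tendsto_rpow_mul_gaussLaplace_atTop hn2) (Gamma_pos_of_pos hn2).ne').congr' ?_
    filter_upwards [eventually_gt_atTop 0] with s hs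
    rw [← rpow_sub (by positivity)]
    ring_nf
  · have hratio := tendsto_div_mul_div_of_tendsto_mul (tendsto_gaussLaplace_atBot hnk2)
      (tendsto_gaussLaplace_atBot hn2) (by positivity)
    rw [div_self (by positivity)] at hratio
    refine hratio.congr' ?_
    filter_upwards [eventually_lt_atBot 0] with s hs
    rw [mul_div_mul_right _ _ (exp_pos _).ne', ← rpow_sub (abs_pos.mpr hs.ne)]
    ring_nf
end

section
/- For every real n > 0 and every integer p ≥ 1, the universal ratio at the centre of the window satisfies Σ_{n,2p}(0) / (Σ_{n,2}(0))^p = Γ((n+2p)/4) · (Γ(n/4))^{p−1} / (Γ((n+2)/4))^p, where Γ is the Gamma function. -/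
open MeasureTheory

/-! At `s = 0` the substitution `t = x⁴/4` turns `I_k(0)` into a Gamma integral,
`I_k(0) = 4^{(k+1)/4 - 1} Γ((k+1)/4)`. In the ratio `Σ_{n,2p}(0) / Σ_{n,2}(0)^p` the powers
of `4` cancel, as do `p - 1` of the `p` factors `Γ(n/4)` in the denominator. -/

open Real

lemma I_zero {k : ℝ} (hk : -1 < k) :
    I k 0 = (4 : ℝ) ^ ((k + 1) / 4) / 4 * Gamma ((k + 1) / 4) := by
  have integrand_eq : ∀ x : ℝ, x ^ k * exp (-x ^ 4 / 4 - 0 * x ^ 2 / 2)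
      = x ^ k * exp (-(1 / 4) * x ^ (4 : ℝ)) := fun x => by
    rw [rpow_ofNat]; ring_nf
  rw [I, funext integrand_eq, integral_rpow_mul_exp_neg_mul_rpow (by norm_num) hk (by norm_num),
    one_div, inv_rpow (by norm_num), ← rpow_neg (by norm_num), neg_div, neg_neg]
  ring

lemma Sig_zero {n k : ℝ} (hn : 0 < n) (hk : -n < k) :
    Sig n k 0 = (4 : ℝ) ^ (k / 4) * Gamma ((k + n) / 4) / Gamma (n / 4) := by
  have hΓ : Gamma (n / 4) ≠ 0 := (Gamma_pos_of_pos (by positivity)).ne'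
  rw [Sig, I_zero (by linarith), I_zero (by linarith), sub_add_cancel, sub_add_cancel,
    add_div k, rpow_add (by norm_num)]
  field_simp

/-- The universal ratio at the centre of the window:
`Σ_{n,2p}(0) / Σ_{n,2}(0)^p = Γ((n+2p)/4) Γ(n/4)^{p-1} / Γ((n+2)/4)^p`. -/
theorem universal_ratio_at_zero (n : ℝ) (hn : 0 < n) (p : ℕ) (hp : 1 ≤ p) :
    Sig n (2 * p) 0 / (Sig n 2 0) ^ p
      = Real.Gamma ((n + 2 * p) / 4) * (Real.Gamma (n / 4)) ^ (p - 1)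
          / (Real.Gamma ((n + 2) / 4)) ^ p := by
  obtain ⟨m, rfl⟩ := Nat.exists_eq_add_of_le' hp
  have hΓn : Gamma (n / 4) ≠ 0 := (Gamma_pos_of_pos (by positivity)).ne'
  have hΓn2 : Gamma ((n + 2) / 4) ≠ 0 := (Gamma_pos_of_pos (by positivity)).ne'
  have four_pow : (4 : ℝ) ^ (2 * ((m + 1 : ℕ) : ℝ) / 4) = ((4 : ℝ) ^ ((2 : ℝ) / 4)) ^ (m + 1) := by
    rw [← rpow_mul_natCast (by norm_num)]; ring_nf
  rw [Sig_zero hn (by push_cast; linarith), Sig_zero hn (by linarith), four_pow, add_comm _ n,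
    add_comm 2 n, Nat.add_sub_cancel, div_pow, mul_pow, pow_succ (Gamma (n / 4))]
  field_simp
end

section
/- For self-avoiding walk on the complete graph: with χ_N(z) := Σ_{m=0}^{N−1} z^m · Π_{j=1}^{m} (N − j) (the susceptibility, i.e. the generating function of the numbers of m-step self-avoiding walks from a fixed vertex of the complete graph on N vertices), for every s ∈ ℝ one has lim_{N→∞} (2N)^{−1/2} · χ_N( N^{−1}(1 − s(2N)^{−1/2}) ) = f_0(s), where f_0(s) = ∫₀^∞ x e^{−x⁴/4 − s x²/2} dx. -/
open MeasureTheory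

/-- The susceptibility of self-avoiding walk on the complete graph on `N` vertices:
`χ_N(z) = Σ_{m=0}^{N-1} z^m Π_{j=1}^m (N - j)`. -/
noncomputable def chi (N : ℕ) (z : ℝ) : ℝ :=
  ∑ m ∈ Finset.range N, z ^ m * ∏ j ∈ Finset.Icc 1 m, ((N : ℝ) - (j : ℝ))

/-!
With `c = √(2N)` and `z = N⁻¹(1 - s/c)`, the `m`-th term of `χ_N(z)` is
`(1 - s/c)^m ∏_{j ≤ m} (1 - j/N)`, so `χ_N(z)/c` is the integral over `u > 0` of the step
function taking that value at `m = ⌊u c⌋`. For fixed `u` we have `m ~ u c`, and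
`log(1 - x) = -x + O(x²)` turns the two factors into `exp(-m s/c) → exp(-s u)` and
`exp(-m(m+1)/c²) → exp(-u²)`, while the same estimates bound the step function by
`exp(-u² + (|s| + 1) u)`. Dominated convergence gives the limit `∫₀^∞ exp(-u² - s u) du`, which
is `f_0(s)` after the substitution `u = x²/2`.
-/

open Set Filter Real Topology

theorem abs_log_one_sub_add_le {x : ℝ} (hx : |x| ≤ 1 / 2) : |log (1 - x) + x| ≤ 2 * x ^ 2 := by
  have h := abs_log_sub_add_sum_range_le (x := x) (by linarith) 1
  norm_num [add_comm x] at h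
  refine h.trans ?_
  rw [div_le_iff₀ (by linarith), ← sq_abs x]
  nlinarith [abs_nonneg x]

theorem tendsto_prod_one_sub_of_tendsto_sum {α ι : Type*} {l : Filter α} {S : α → Finset ι}
    {x : α → ι → ℝ} {L : ℝ} (hsum : Tendsto (fun n => ∑ i ∈ S n, x n i) l (𝓝 L))
    (hsq : Tendsto (fun n => ∑ i ∈ S n, x n i ^ 2) l (𝓝 0)) :
    Tendsto (fun n => ∏ i ∈ S n, (1 - x n i)) l (𝓝 (exp (-L))) := by
  have hsmall : ∀ᶠ n in l, ∀ i ∈ S n, |x n i| ≤ 1 / 2 := by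
    filter_upwards [hsq.eventually_le_const (show (0 : ℝ) < (1 / 2) ^ 2 by norm_num)] with n hn i hi
    have hxi : x n i ^ 2 ≤ (1 / 2) ^ 2 :=
      (Finset.single_le_sum (fun j _ => sq_nonneg (x n j)) hi).trans hn
    simpa using sq_le_sq.1 hxi
  have hlog : Tendsto (fun n => ∑ i ∈ S n, log (1 - x n i)) l (𝓝 (-L)) := by
    have herr : Tendsto (fun n => ∑ i ∈ S n, (log (1 - x n i) + x n i)) l (𝓝 0) := by
      refine squeeze_zero_norm' ?_ (by simpa using hsq.const_mul 2)
      filter_upwards [hsmall] with n hn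
      rw [Real.norm_eq_abs, Finset.mul_sum]
      exact (Finset.abs_sum_le_sum_abs _ _).trans
        (Finset.sum_le_sum fun i hi => abs_log_one_sub_add_le (hn i hi))
    simpa [Finset.sum_add_distrib] using herr.sub hsum
  refine ((continuous_exp.tendsto _).comp hlog).congr' ?_
  filter_upwards [hsmall] with n hn
  rw [Function.comp_apply, exp_sum]
  exact Finset.prod_congr rfl fun i hi => exp_log (by linarith [(abs_le.1 (hn i hi)).2])

theorem prod_one_sub_le_exp_neg_sum {ι : Type*} {S : Finset ι} {x : ι → ℝ}
    (hx : ∀ i ∈ S, x i ≤ 1) : ∏ i ∈ S, (1 - x i) ≤ exp (-∑ i ∈ S, x i) := by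
  rw [← Finset.sum_neg_distrib, exp_sum]
  exact Finset.prod_le_prod (fun i hi => sub_nonneg.2 (hx i hi)) fun i _ => one_sub_le_exp_neg _

theorem integral_Ioi_comp_natFloor_mul {f : ℕ → ℝ} {n : ℕ} (hf : ∀ m, n ≤ m → f m = 0)
    {c : ℝ} (hc : 0 < c) : ∫ u in Ioi 0, f ⌊u * c⌋₊ = (∑ m ∈ Finset.range n, f m) / c := by
  have hstep : ∀ u ∈ Ici (0 : ℝ), f ⌊u * c⌋₊ =
      ∑ m ∈ Finset.range n, (Ico (m / c) ((m + 1) / c)).indicator (fun _ => f m) u := by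
    intro u hu
    have hmem : ∀ m : ℕ, u ∈ Ico (m / c) ((m + 1) / c) ↔ ⌊u * c⌋₊ = m := fun m => by
      rw [Nat.floor_eq_iff (mul_nonneg hu hc.le), mem_Ico, div_le_iff₀ hc, lt_div_iff₀ hc]
    rw [Finset.sum_eq_single ⌊u * c⌋₊]
    · rw [indicator_of_mem ((hmem _).2 rfl)]
    · exact fun m _ hm => indicator_of_notMem (fun h => hm ((hmem m).1 h).symm) _
    · exact fun h => indicator_apply_eq_zero.2 fun _ => hf _ (by simpa using h)
  have hpiece : ∀ m : ℕ,
      ∫ u in Ici 0, (Ico (m / c) ((m + 1) / c)).indicator (fun _ => f m) u = f m / c := by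
    intro m
    rw [setIntegral_indicator measurableSet_Ico,
      inter_eq_right.2 (Ico_subset_Ici_self.trans (Ici_subset_Ici.2 (by positivity))),
      setIntegral_const, measureReal_def, Real.volume_Ico, ← sub_div, add_sub_cancel_left,
      ENNReal.toReal_ofReal (by positivity), smul_eq_mul, one_div_mul_eq_div]
  rw [← integral_Ici_eq_integral_Ioi, setIntegral_congr_fun measurableSet_Ici hstep,
    integral_finsetSum _ fun m _ => ?_, Finset.sum_div]
  · exact Finset.sum_congr rfl fun m _ => hpiece m
  · exact ((integrableOn_const measure_Ico_lt_top.ne).integrable_indicator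
      measurableSet_Ico).integrableOn

theorem integrable_exp_neg_sq_add_mul (b : ℝ) : Integrable fun u : ℝ => exp (-u ^ 2 + b * u) := by
  refine (((integrable_exp_neg_mul_sq one_pos).comp_sub_right (b / 2)).const_mul
    (exp (b ^ 2 / 4))).congr (Eventually.of_forall fun u => ?_)
  simp only [← exp_add]
  ring_nf

theorem I_one_eq_integral_exp (s : ℝ) : I 1 s = ∫ u in Ioi 0, exp (-u ^ 2 - s * u) := by
  set g : ℝ → ℝ := fun y => exp (-y ^ 2 / 4 - s * y / 2)
  have hsq := integral_comp_rpow_Ioi g (two_ne_zero' ℝ)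
  have hlin := integral_comp_mul_left_Ioi g 0 two_pos
  rw [mul_zero] at hlin
  calc I 1 s = 2⁻¹ * ∫ x in Ioi 0, (|(2 : ℝ)| * x ^ ((2 : ℝ) - 1)) • g (x ^ (2 : ℝ)) := by
        rw [I, ← integral_const_mul]
        refine setIntegral_congr_fun measurableSet_Ioi fun x _ => ?_
        norm_num [g]
        ring_nf
    _ = ∫ u in Ioi 0, g (2 * u) := by rw [hsq, hlin, smul_eq_mul]
    _ = ∫ u in Ioi 0, exp (-u ^ 2 - s * u) := by
        congr 1 with u
        simp only [g]
        ring_nf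

theorem chi_inv_mul {N : ℕ} (hN : N ≠ 0) (w : ℝ) :
    chi N ((N : ℝ)⁻¹ * w) =
      ∑ m ∈ Finset.range N, w ^ m * ∏ j ∈ Finset.Icc 1 m, (1 - (j : ℝ) / N) := by
  refine Finset.sum_congr rfl fun m _ => ?_
  rw [mul_pow, mul_comm ((N : ℝ)⁻¹ ^ m), mul_assoc,
    show (N : ℝ)⁻¹ ^ m = ∏ _j ∈ Finset.Icc 1 m, (N : ℝ)⁻¹ by simp, ← Finset.prod_mul_distrib]
  congr 1
  refine Finset.prod_congr rfl fun j _ => ?_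
  field_simp

theorem prod_Icc_one_sub_div_eq_zero {N m : ℕ} (hN : N ≠ 0) (hm : N ≤ m) :
    ∏ j ∈ Finset.Icc 1 m, (1 - (j : ℝ) / N) = 0 :=
  Finset.prod_eq_zero (Finset.mem_Icc.2 ⟨Nat.one_le_iff_ne_zero.2 hN, hm⟩) (by simp [hN])

theorem sum_Icc_div_eq (N m : ℕ) :
    ∑ j ∈ Finset.Icc 1 m, (j : ℝ) / N = m / √(2 * N) * ((m + 1) / √(2 * N)) := by
  have hgauss : ∑ j ∈ Finset.Icc 1 m, (j : ℝ) = m * (m + 1) / 2 := by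
    induction m with
    | zero => simp
    | succ m ih =>
      rw [Finset.sum_Icc_succ_top (by omega), ih]
      push_cast
      ring
  rw [← Finset.sum_div, hgauss, div_mul_div_comm, mul_self_sqrt (by positivity)]
  ring

noncomputable def windowTerm (s : ℝ) (N m : ℕ) : ℝ :=
  (1 - s / √(2 * N)) ^ m * ∏ j ∈ Finset.Icc 1 m, (1 - (j : ℝ) / N)

theorem tendsto_windowTerm_floor (s : ℝ) {u : ℝ} (hu : 0 ≤ u) :
    Tendsto (fun N : ℕ => windowTerm s N ⌊u * √(2 * N)⌋₊) atTop (𝓝 (exp (-u ^ 2 - s * u))) := by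
  set c : ℕ → ℝ := fun N => √(2 * N)
  set m : ℕ → ℕ := fun N => ⌊u * c N⌋₊
  have hc : Tendsto c atTop atTop :=
    tendsto_sqrt_atTop.comp (tendsto_natCast_atTop_atTop.const_mul_atTop two_pos)
  have hc_inv : Tendsto (fun N => (c N)⁻¹) atTop (𝓝 0) := hc.inv_tendsto_atTop
  have hmc : Tendsto (fun N => (m N : ℝ) / c N) atTop (𝓝 u) :=
    (tendsto_nat_floor_mul_div_atTop hu).comp hc
  have hm1c : Tendsto (fun N => ((m N : ℝ) + 1) / c N) atTop (𝓝 u) := by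
    simpa [add_div] using hmc.add hc_inv
  have hmN : Tendsto (fun N => (m N : ℝ) / N) atTop (𝓝 0) := by
    refine (by simpa using (hmc.mul hc_inv).const_mul 2 :
      Tendsto (fun N => 2 * ((m N : ℝ) / c N * (c N)⁻¹)) atTop (𝓝 0)).congr fun N => ?_
    rw [← div_eq_mul_inv, div_div, mul_self_sqrt (by positivity)]
    ring
  have hpow : Tendsto (fun N => (1 - s / c N) ^ m N) atTop (𝓝 (exp (-(s * u)))) := by
    have h := tendsto_prod_one_sub_of_tendsto_sum (l := atTop) (S := fun N => Finset.range (m N))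
      (x := fun N _ => s / c N) (L := s * u) ?_ ?_
    · simpa using h
    · refine (hmc.const_mul s).congr fun N => ?_
      simp only [Finset.sum_const, Finset.card_range, nsmul_eq_mul]
      ring
    · refine (by simpa using hmc.mul (hc_inv.const_mul (s ^ 2)) : Tendsto
        (fun N => (m N : ℝ) / c N * (s ^ 2 * (c N)⁻¹)) atTop (𝓝 0)).congr fun N => ?_
      simp only [Finset.sum_const, Finset.card_range, nsmul_eq_mul]
      ring
  have hprod : Tendsto (fun N => ∏ j ∈ Finset.Icc 1 (m N), (1 - (j : ℝ) / N)) atTop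
      (𝓝 (exp (-(u * u)))) := by
    refine tendsto_prod_one_sub_of_tendsto_sum (by simpa only [sum_Icc_div_eq] using hmc.mul hm1c)
      (squeeze_zero (fun N => Finset.sum_nonneg fun j _ => sq_nonneg _) (fun N => ?_)
        (by simpa using hmN.mul (hmc.mul hm1c)))
    rw [← sum_Icc_div_eq, Finset.mul_sum]
    refine Finset.sum_le_sum fun j hj => ?_
    rw [sq]
    gcongr
    exact_mod_cast (Finset.mem_Icc.1 hj).2
  rw [show -u ^ 2 - s * u = -(s * u) + -(u * u) by ring, exp_add]
  exact hpow.mul hprod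

theorem abs_windowTerm_floor_le (s : ℝ) {N : ℕ} (hN : N ≠ 0) {u : ℝ} (hu : 0 ≤ u) :
    |windowTerm s N ⌊u * √(2 * N)⌋₊| ≤ exp (-u ^ 2 + (|s| + 1) * u) := by
  set c := √(2 * N)
  set m := ⌊u * c⌋₊
  have hc : 1 ≤ c := one_le_sqrt.2 (by norm_cast; omega)
  have hmc : (m : ℝ) ≤ u * c := Nat.floor_le (by positivity)
  have hm1c : u * c < m + 1 := Nat.lt_floor_add_one _
  rcases lt_or_ge m N with hmN | hmN
  · have hjN : ∀ j ∈ Finset.Icc 1 m, (j : ℝ) / N ≤ 1 := fun j hj =>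
      div_le_one_of_le₀ (by exact_mod_cast (Finset.mem_Icc.1 hj).2.trans hmN.le) N.cast_nonneg
    have hprod_nonneg : 0 ≤ ∏ j ∈ Finset.Icc 1 m, (1 - (j : ℝ) / N) :=
      Finset.prod_nonneg fun j hj => sub_nonneg.2 (hjN j hj)
    have hpow : |(1 - s / c) ^ m| ≤ exp (|s| * u) := by
      have hbase : |1 - s / c| ≤ exp (|s| / c) := by
        calc |1 - s / c| ≤ |s| / c + 1 := by
              simpa [abs_div, abs_of_pos (one_pos.trans_le hc), add_comm] using abs_sub 1 (s / c)
          _ ≤ exp (|s| / c) := add_one_le_exp _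
      calc |(1 - s / c) ^ m| ≤ exp (|s| / c) ^ m := by
            rw [abs_pow]; exact pow_le_pow_left₀ (abs_nonneg _) hbase m
        _ = exp (|s| * (m / c)) := by rw [← exp_nat_mul]; ring_nf
        _ ≤ exp (|s| * u) := by
            gcongr
            rwa [div_le_iff₀ (one_pos.trans_le hc)]
    have hprod : ∏ j ∈ Finset.Icc 1 m, (1 - (j : ℝ) / N) ≤ exp (-u ^ 2 + u) := by
      refine (prod_one_sub_le_exp_neg_sum hjN).trans (exp_le_exp.2 ?_)
      rw [sum_Icc_div_eq, div_mul_div_comm, neg_le, le_div_iff₀ (by positivity)]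
      nlinarith [mul_nonneg hu (sub_nonneg.2 hc), (Nat.cast_nonneg m : (0 : ℝ) ≤ m)]
    calc |windowTerm s N m| = |(1 - s / c) ^ m| * ∏ j ∈ Finset.Icc 1 m, (1 - (j : ℝ) / N) := by
          rw [windowTerm, abs_mul, abs_of_nonneg hprod_nonneg]
      _ ≤ exp (|s| * u) * exp (-u ^ 2 + u) := mul_le_mul hpow hprod hprod_nonneg (exp_nonneg _)
      _ = exp (-u ^ 2 + (|s| + 1) * u) := by rw [← exp_add]; ring_nf
  · rw [windowTerm, prod_Icc_one_sub_div_eq_zero hN hmN, mul_zero, abs_zero]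
    positivity

/-- In the scaling window `z = N⁻¹(1 - s(2N)^{-1/2})`, the susceptibility of
self-avoiding walk on the complete graph satisfies `(2N)^{-1/2} χ_N(z) → f_0(s)`. -/
theorem complete_graph_saw_window_profile (s : ℝ) :
    Filter.Tendsto
      (fun N : ℕ => chi N ((N : ℝ)⁻¹ * (1 - s / Real.sqrt (2 * N))) / Real.sqrt (2 * N))
      Filter.atTop (nhds (I 1 s)) := by
  have hstep : ∀ᶠ N : ℕ in atTop, ∫ u in Ioi 0, windowTerm s N ⌊u * √(2 * N)⌋₊ =
      chi N ((N : ℝ)⁻¹ * (1 - s / √(2 * N))) / √(2 * N) := by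
    filter_upwards [eventually_ne_atTop 0] with N hN
    rw [integral_Ioi_comp_natFloor_mul (fun m hm => by
      rw [windowTerm, prod_Icc_one_sub_div_eq_zero hN hm, mul_zero]) (by positivity),
      chi_inv_mul hN]
    rfl
  rw [I_one_eq_integral_exp]
  refine (tendsto_integral_filter_of_dominated_convergence (fun u => exp (-u ^ 2 + (|s| + 1) * u))
    (Eventually.of_forall fun N => ?_) ?_ (integrable_exp_neg_sq_add_mul _).integrableOn ?_).congr'
    hstep
  · exact ((measurable_from_nat (f := windowTerm s N)).comp
      (Nat.measurable_floor.comp (measurable_id.mul_const _))).aestronglyMeasurable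
  · filter_upwards [eventually_ne_atTop 0] with N hN
    exact (ae_restrict_mem measurableSet_Ioi).mono fun u hu =>
      abs_windowTerm_floor_le s hN (le_of_lt hu)
  · exact (ae_restrict_mem measurableSet_Ioi).mono fun u hu =>
      tendsto_windowTerm_floor s (le_of_lt hu)
end
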